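/- Let (k,m) ∈ ℕ × ℕ* and let z ∈ ℳ_{k,m} be a fixed point of F_{k,m} whose sequence is preperiodic of exact type (k,m). Set δ_i = d·z_i^{d−1}. Then δ_i ≠ 0 for all 1 ≤ i ≤ k+m−1, the transpose L^* of L = D_z F_{k,m} is invertible, and its inverse is the linear map L_* : ℳ_{k,m}^* → ℳ_{k,m}^* defined by L_*(ω_i) = (ω_{i+1} − ω_1)/δ_i for 1 ≤ i ≤ k+m−1. -/

import Mathlib

/-!
At a fixed point `z` of `F_{k,m}` one has `z₁ = -κ` and `z_{j+1} = z_j^d - κ`, so `z` is the orbit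
of `0` under `t ↦ t^d - κ`. A vanishing `z_i` with `1 ≤ i < k + m` would make `z` periodic with
period `i` from the first index on, contradicting exactness.

Since `F_{k,m}(x)_{i+1} - F_{k,m}(x)_1 = x_i^d`, differentiating gives
`L^*(ω_{i+1} - ω_1) = δ_i ω_i`. An element of `ℳ_{k,m}` is determined by its first `k + m - 1`
coordinates (using `β ≠ 0` for the coordinate `k + m`), so `ω_1, …, ω_{k+m-1}` span the
finite-dimensional space `ℳ_{k,m}^*`; hence `L^*` is onto, thus bijective, and `L^* ∘ L_*` is the
identity because it fixes every `ω_i`.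
-/

noncomputable section

/-- Model of the space `𝓔 = ℂ^{ℕ*}` of complex sequences `(x_i)_{i ≥ 1}`:
functions `ℕ → ℂ` with a dummy coordinate `x 0` which encodes the convention `x₀ := 0`. -/
abbrev Eseq : Type := ℕ → ℂ

/-- The submodule of `ℕ → ℂ` corresponding to `𝓔` (dummy coordinate `0` vanishes). -/
def E0 : Submodule ℂ Eseq where
  carrier := {x | x 0 = 0}
  add_mem' := by
    rintro a b ha hb
    simp only [Set.mem_setOf_eq, Pi.add_apply] at *
    rw [ha, hb]; ring
  zero_mem' := rfl
  smul_mem' := by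
    rintro c a ha
    simp only [Set.mem_setOf_eq, Pi.smul_apply] at *
    rw [ha, smul_zero]

/-- `𝓛`: the subspace of constant sequences. -/
def Lconst : Submodule ℂ Eseq where
  carrier := {x | x 0 = 0 ∧ ∀ i, 1 ≤ i → x i = x 1}
  add_mem' := by
    rintro a b ⟨ha0, ha⟩ ⟨hb0, hb⟩
    exact ⟨by simp [ha0, hb0], fun i hi => by simp only [Pi.add_apply, ha i hi, hb i hi]⟩
  zero_mem' := ⟨rfl, fun i _ => rfl⟩
  smul_mem' := by
    rintro c a ⟨ha0, ha⟩
    exact ⟨by simp [ha0], fun i hi => by simp only [Pi.smul_apply, ha i hi]⟩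

/-- `ℋ_{k,m} = {x ∈ 𝓔 : β x_{k+m} − x_k = 0}` (convention `x₀ := 0`). -/
def Hspace (β : ℂ) (k m : ℕ) : Submodule ℂ Eseq where
  carrier := {x | x 0 = 0 ∧ β * x (k + m) - x k = 0}
  add_mem' := by
    rintro a b ⟨ha0, ha⟩ ⟨hb0, hb⟩
    refine ⟨by simp [ha0, hb0], ?_⟩
    simp only [Pi.add_apply]
    linear_combination ha + hb
  zero_mem' := ⟨rfl, by simp⟩
  smul_mem' := by
    rintro c a ⟨ha0, ha⟩
    refine ⟨by simp [ha0], ?_⟩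
    simp only [Pi.smul_apply, smul_eq_mul]
    linear_combination c * ha

/-- `𝓟_{k,m} = {x ∈ 𝓔 : x_{i+m} = x_i for all i ≥ k+1}`. -/
def Pspace (k m : ℕ) : Submodule ℂ Eseq where
  carrier := {x | x 0 = 0 ∧ ∀ i, k + 1 ≤ i → x (i + m) = x i}
  add_mem' := by
    rintro a b ⟨ha0, ha⟩ ⟨hb0, hb⟩
    exact ⟨by simp [ha0, hb0], fun i hi => by simp only [Pi.add_apply, ha i hi, hb i hi]⟩
  zero_mem' := ⟨rfl, fun i _ => rfl⟩
  smul_mem' := by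
    rintro c a ⟨ha0, ha⟩
    exact ⟨by simp [ha0], fun i hi => by simp only [Pi.smul_apply, ha i hi]⟩

/-- `ℳ_{k,m} = 𝓟_{k,m} ∩ ℋ_{k,m}`. -/
def Mspace (β : ℂ) (k m : ℕ) : Submodule ℂ Eseq := Pspace k m ⊓ Hspace β k m

/-- `Q : 𝓔 → 𝓔`, `Q(x)_1 = 0`, `Q(x)_i = x_{i-1}^d` for `i ≥ 2`. -/
def Qmap (d : ℕ) (x : Eseq) : Eseq := fun i => if 2 ≤ i then (x (i - 1)) ^ d else 0

/-- The constant subtracted by the projection `π_{k,m}` onto `ℋ_{k,m}` parallel to `𝓛`. -/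
def kappa (β : ℂ) (k m : ℕ) (x : Eseq) : ℂ :=
  if k = 0 then x m else (β * x (k + m) - x k) / (β - 1)

/-- `π_{k,m} : 𝓔 → 𝓔`, the projection onto `ℋ_{k,m}` parallel to `𝓛`. -/
def projH (β : ℂ) (k m : ℕ) (x : Eseq) : Eseq :=
  fun i => if i = 0 then 0 else x i - kappa β k m x

/-- `F_{k,m} = π_{k,m} ∘ Q`. -/
def Fmap (β : ℂ) (d k m : ℕ) (x : Eseq) : Eseq := projH β k m (Qmap d x)

/-- The coordinate linear form `ω_i` on `ℳ_{k,m}`. -/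
def omegaForm (β : ℂ) (k m : ℕ) (i : ℕ) : Module.Dual ℂ (Mspace β k m) where
  toFun v := (v : Eseq) i
  map_add' a b := rfl
  map_smul' c a := rfl

/-- `L` is the derivative `D_x F_{k,m} : ℳ_{k,m} → ℳ_{k,m}` of `F_{k,m}` at `x`:
in every direction `v ∈ ℳ_{k,m}` and coordinate `i`, `L v` is the derivative at `t = 0`
of `t ↦ F_{k,m}(x + t v)_i`. -/
def IsDerivAt (β : ℂ) (d k m : ℕ) (x : Eseq)
    (L : Mspace β k m →ₗ[ℂ] Mspace β k m) : Prop :=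
  ∀ v : Mspace β k m, ∀ i : ℕ,
    ((L v : Eseq) i) = deriv (fun t : ℂ => Fmap β d k m (x + t • (v : Eseq)) i) 0

/-- The critical set `C(F_{k,m})`: points of `ℳ_{k,m}` where the derivative is not invertible. -/
def CsetD (β : ℂ) (d k m : ℕ) : Set Eseq :=
  {x | x ∈ Mspace β k m ∧
    ∀ L : Mspace β k m →ₗ[ℂ] Mspace β k m, IsDerivAt β d k m x L → ¬ Function.Bijective L}

/-- The post-critical set `PC(F_{k,m}) = ⋃_{j ≥ 1} F_{k,m}^{∘j}(C(F_{k,m}))`. -/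
def PCsetD (β : ℂ) (d k m : ℕ) : Set Eseq :=
  ⋃ j : ℕ, ⋃ _ : 1 ≤ j, (Fmap β d k m)^[j] '' CsetD β d k m

/-- `Δ_{k,m} = {x ∈ ℳ_{k,m} : x_i = x_j for some 1 ≤ i < j ≤ k+m}`. -/
def Delta (β : ℂ) (k m : ℕ) : Set Eseq :=
  {x | x ∈ Mspace β k m ∧ ∃ i j : ℕ, 1 ≤ i ∧ i < j ∧ j ≤ k + m ∧ x i = x j}

/-- Coordinates of a point of `ℂ^n`, indexed from `1` to `n`, with the convention `x₀ := 0`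
(and value `0` out of range). -/
def coordFin {n : ℕ} (x : Fin n → ℂ) (i : ℕ) : ℂ :=
  if h : 1 ≤ i ∧ i ≤ n then x ⟨i - 1, by omega⟩ else 0

/-- The Koch map `G_{k,m} : ℂ^{k+m-1} → ℂ^{k+m-1}`. -/
def Gmap (β : ℂ) (d k m : ℕ) (x : Fin (k + m - 1) → ℂ) : Fin (k + m - 1) → ℂ :=
  if k = 0 then
    fun j => (coordFin x j.1) ^ d - (coordFin x (m - 1)) ^ d
  else
    fun j =>
      (coordFin x j.1 - (β * coordFin x (k + m - 1) - coordFin x (k - 1)) / (β - 1)) ^ d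

/-- The critical set `C(G_{k,m})`: points where the derivative is not invertible. -/
def Gcrit (β : ℂ) (d k m : ℕ) : Set (Fin (k + m - 1) → ℂ) :=
  {z | ¬ Function.Bijective (fderiv ℂ (Gmap β d k m) z)}

/-- The post-critical set `PC(G_{k,m}) = ⋃_{j ≥ 1} G_{k,m}^{∘j}(C(G_{k,m}))`. -/
def GPC (β : ℂ) (d k m : ℕ) : Set (Fin (k + m - 1) → ℂ) :=
  ⋃ j : ℕ, ⋃ _ : 1 ≤ j, (Gmap β d k m)^[j] '' Gcrit β d k m

/-- The polynomial `P_z` associated to a point `z ∈ ℂ^{k+m-1}`. -/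
def Ppoly (β : ℂ) (d k m : ℕ) (z : Fin (k + m - 1) → ℂ) : ℂ → ℂ :=
  if k = 0 then fun t => t ^ d - (coordFin z (m - 1)) ^ d
  else fun t => (t - (β * coordFin z (k + m - 1) - coordFin z (k - 1)) / (β - 1)) ^ d

open Module Set

theorem Submodule.span_range_eq_top_of_separating {K V ι : Type*} [Field K] [AddCommGroup V]
    [Module K V] [Finite ι] (ω : ι → Dual K V) (h : ∀ v, (∀ i, ω i v = 0) → v = 0) :
    Submodule.span K (range ω) = ⊤ := by
  refine Submodule.eq_top_iff'.mpr fun φ ↦ mem_span_of_iInf_ker_le_ker fun v hv ↦ ?_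
  simp only [Submodule.mem_iInf, LinearMap.mem_ker] at hv
  simp [h v hv]

theorem FiniteDimensional.of_separating {K V ι : Type*} [Field K] [AddCommGroup V]
    [Module K V] [Finite ι] (ω : ι → Dual K V) (h : ∀ v, (∀ i, ω i v = 0) → v = 0) :
    FiniteDimensional K V :=
  FiniteDimensional.of_injective (LinearMap.pi ω) <| by
    rw [← LinearMap.ker_eq_bot, LinearMap.ker_eq_bot']
    exact fun v hv ↦ h v fun i ↦ congrFun hv i

variable {β : ℂ} {d k m : ℕ}

theorem Qmap_succ {x : Eseq} (hx : x 0 = 0) (hd : d ≠ 0) (j : ℕ) :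
    Qmap d x (j + 1) = x j ^ d := by
  rcases j with _ | j
  · simp [Qmap, hx, hd]
  · simp [Qmap]

theorem Fmap_apply_zero (x : Eseq) : Fmap β d k m x 0 = 0 := rfl

theorem Fmap_apply_of_ne_zero (x : Eseq) {j : ℕ} (hj : j ≠ 0) :
    Fmap β d k m x j = Qmap d x j - kappa β k m (Qmap d x) :=
  if_neg hj

theorem Fmap_apply_succ_sub_apply_one (x : Eseq) {i : ℕ} (hi : i ≠ 0) :
    Fmap β d k m x (i + 1) - Fmap β d k m x 1 = x i ^ d := by
  rw [Fmap_apply_of_ne_zero _ (by omega), Fmap_apply_of_ne_zero _ one_ne_zero]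
  simp [Qmap, hi]

theorem eq_iterate_of_Fmap_eq {z : Eseq} (hd : d ≠ 0) (hfix : Fmap β d k m z = z) (j : ℕ) :
    z j = (fun t ↦ t ^ d - kappa β k m (Qmap d z))^[j] 0 := by
  have hz0 : z 0 = 0 := by rw [← hfix, Fmap_apply_zero]
  induction j with
  | zero => exact hz0
  | succ j ih =>
    rw [Function.iterate_succ_apply', ← ih, ← Qmap_succ hz0 hd,
      ← Fmap_apply_of_ne_zero _ j.succ_ne_zero, hfix]

theorem apply_ne_zero_of_exact {z : Eseq} (hd : d ≠ 0) (hfix : Fmap β d k m z = z)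
    (hexact : ∀ a b : ℕ, 1 ≤ b → (∀ i, a + 1 ≤ i → z (i + b) = z i) → k ≤ a ∧ m ≤ b)
    {i : ℕ} (hi : i ∈ Icc 1 (k + m - 1)) : z i ≠ 0 := by
  intro hzi
  have hper (j : ℕ) : z (j + i) = z j := by
    rw [eq_iterate_of_Fmap_eq hd hfix (j + i), Function.iterate_add_apply,
      ← eq_iterate_of_Fmap_eq hd hfix i, hzi, ← eq_iterate_of_Fmap_eq hd hfix j]
  have := hexact 0 i hi.1 fun j _ ↦ hper j
  rw [mem_Icc] at hi
  omega

theorem differentiable_Fmap_line (x v : Eseq) (j : ℕ) :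
    Differentiable ℂ fun t : ℂ ↦ Fmap β d k m (x + t • v) j := by
  simp only [Fmap, projH, kappa, Qmap, Pi.add_apply, Pi.smul_apply, smul_eq_mul]
  split_ifs <;> fun_prop

theorem IsDerivAt.apply_succ_sub_apply_one {z : Eseq} {L : Mspace β k m →ₗ[ℂ] Mspace β k m}
    (hL : IsDerivAt β d k m z L) (v : Mspace β k m) {i : ℕ} (hi : i ≠ 0) :
    (L v : Eseq) (i + 1) - (L v : Eseq) 1 = (d * z i ^ (d - 1)) * (v : Eseq) i := by
  rw [hL, hL, ← deriv_sub (differentiable_Fmap_line _ _ _ _) (differentiable_Fmap_line _ _ _ _)]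
  simp only [Pi.sub_def, Fmap_apply_succ_sub_apply_one _ hi, Pi.add_apply, Pi.smul_apply,
    smul_eq_mul]
  have := ((hasDerivAt_mul_const (x := 0) ((v : Eseq) i)).const_add (z i)).pow d
  simp only [zero_mul, add_zero] at this
  exact this.deriv

theorem IsDerivAt.dualMap_omegaForm_succ_sub_one {z : Eseq}
    {L : Mspace β k m →ₗ[ℂ] Mspace β k m} (hL : IsDerivAt β d k m z L) {i : ℕ} (hi : i ≠ 0) :
    L.dualMap (omegaForm β k m (i + 1) - omegaForm β k m 1) =
      (d * z i ^ (d - 1)) • omegaForm β k m i := by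
  ext v
  exact hL.apply_succ_sub_apply_one v hi

theorem Mspace.eq_zero_of_omegaForm_eq_zero (hβ : β ≠ 0) (hm : 1 ≤ m) (v : Mspace β k m)
    (hv : ∀ i : Icc 1 (k + m - 1), omegaForm β k m i v = 0) : v = 0 := by
  obtain ⟨⟨hv0, hvP⟩, -, hvH⟩ := Submodule.mem_inf.mp v.2
  have hlow : ∀ i < k + m, (v : Eseq) i = 0 := fun i hi ↦ by
    rcases i with _ | i
    · exact hv0
    · exact hv ⟨i + 1, by simp only [mem_Icc]; omega⟩
  ext j : 2
  induction j using Nat.strong_induction_on with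
  | _ j ih =>
    rcases lt_trichotomy j (k + m) with hj | rfl | hj
    · exact hlow j hj
    · simpa [hlow k (by omega), hβ] using hvH
    · rw [← Nat.sub_add_cancel (by omega : m ≤ j), hvP _ (by omega)]
      exact ih _ (by omega)

theorem Mspace.finiteDimensional (hβ : β ≠ 0) (hm : 1 ≤ m) :
    FiniteDimensional ℂ (Mspace β k m) :=
  .of_separating _ (Mspace.eq_zero_of_omegaForm_eq_zero hβ hm)

theorem Mspace.span_omegaForm_eq_top (hβ : β ≠ 0) (hm : 1 ≤ m) :
    Submodule.span ℂ (omegaForm β k m '' Icc 1 (k + m - 1)) = ⊤ := by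
  rw [image_eq_range]
  exact Submodule.span_range_eq_top_of_separating _ (Mspace.eq_zero_of_omegaForm_eq_zero hβ hm)

theorem stmt14_general (d : ℕ) (hd : 2 ≤ d) (β : ℂ) (hβd : β ^ d = 1)
    (k m : ℕ) (hm : 1 ≤ m) (z : Eseq)
    (hfix : Fmap β d k m z = z)
    (hexact : ∀ a b : ℕ, 1 ≤ b → (∀ i, a + 1 ≤ i → z (i + b) = z i) → k ≤ a ∧ m ≤ b)
    (L : Mspace β k m →ₗ[ℂ] Mspace β k m) (hL : IsDerivAt β d k m z L) :
    (∀ i, 1 ≤ i → i ≤ k + m - 1 → (d : ℂ) * z i ^ (d - 1) ≠ 0) ∧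
    Function.Bijective L.dualMap ∧
    (∀ Lstar : Module.Dual ℂ (Mspace β k m) →ₗ[ℂ] Module.Dual ℂ (Mspace β k m),
      (∀ i, 1 ≤ i → i ≤ k + m - 1 →
        Lstar (omegaForm β k m i) =
          ((d : ℂ) * z i ^ (d - 1))⁻¹ • (omegaForm β k m (i + 1) - omegaForm β k m 1)) →
      (Lstar.comp L.dualMap = LinearMap.id ∧ L.dualMap.comp Lstar = LinearMap.id)) := by
  have hd0 : d ≠ 0 := by omega
  have hβ0 : β ≠ 0 := by rintro rfl; simp [hd0] at hβd
  have hδ (i : ℕ) (h1 : 1 ≤ i) (h2 : i ≤ k + m - 1) : (d : ℂ) * z i ^ (d - 1) ≠ 0 :=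
    mul_ne_zero (Nat.cast_ne_zero.mpr hd0)
      (pow_ne_zero _ (apply_ne_zero_of_exact hd0 hfix hexact ⟨h1, h2⟩))
  have hsection : ∀ i ∈ Icc 1 (k + m - 1), L.dualMap
      (((d : ℂ) * z i ^ (d - 1))⁻¹ • (omegaForm β k m (i + 1) - omegaForm β k m 1)) =
        omegaForm β k m i := fun i hi ↦ by
    rw [map_smul, hL.dualMap_omegaForm_succ_sub_one (Nat.pos_iff_ne_zero.mp hi.1),
      inv_smul_smul₀ (hδ i hi.1 hi.2)]
  have hspan := Mspace.span_omegaForm_eq_top (k := k) hβ0 hm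
  have := Mspace.finiteDimensional (k := k) hβ0 hm
  have hsurj : Function.Surjective L.dualMap := by
    rw [← LinearMap.range_eq_top, eq_top_iff, ← hspan, Submodule.span_le]
    rintro _ ⟨i, hi, rfl⟩
    exact ⟨_, hsection i hi⟩
  refine ⟨hδ, ⟨LinearMap.injective_iff_surjective.mpr hsurj, hsurj⟩, fun Lstar hLstar ↦ ?_⟩
  have hright : L.dualMap ∘ₗ Lstar = LinearMap.id := by
    refine LinearMap.ext_on hspan ?_
    rintro _ ⟨i, hi, rfl⟩
    rw [LinearMap.comp_apply, hLstar i hi.1 hi.2, hsection i hi, LinearMap.id_apply]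
  exact ⟨(LinearMap.comp_eq_id_comm _ _).mp hright, hright⟩

/-- at a fixed point of exact type `(k,m)`, all `δ_i = d z_i^{d-1}` with
`1 ≤ i ≤ k+m−1` are nonzero, the transpose `L^*` of `L = D_z F_{k,m}` is invertible, and
its inverse is the map `L_*` with `L_*(ω_i) = (ω_{i+1} − ω_1)/δ_i`. -/
theorem stmt14 (d : ℕ) (hd : 2 ≤ d) (β : ℂ) (hβd : β ^ d = 1) (hβ1 : β ≠ 1)
    (k m : ℕ) (hm : 1 ≤ m) (z : Eseq) (hz : z ∈ Mspace β k m)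
    (hfix : Fmap β d k m z = z)
    (hexact : ∀ a b : ℕ, 1 ≤ b → (∀ i, a + 1 ≤ i → z (i + b) = z i) → k ≤ a ∧ m ≤ b)
    (L : Mspace β k m →ₗ[ℂ] Mspace β k m) (hL : IsDerivAt β d k m z L) :
    (∀ i, 1 ≤ i → i ≤ k + m - 1 → (d : ℂ) * z i ^ (d - 1) ≠ 0) ∧
    Function.Bijective L.dualMap ∧
    (∀ Lstar : Module.Dual ℂ (Mspace β k m) →ₗ[ℂ] Module.Dual ℂ (Mspace β k m),
      (∀ i, 1 ≤ i → i ≤ k + m - 1 →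
        Lstar (omegaForm β k m i) =
          ((d : ℂ) * z i ^ (d - 1))⁻¹ • (omegaForm β k m (i + 1) - omegaForm β k m 1)) →
      (Lstar.comp L.dualMap = LinearMap.id ∧ L.dualMap.comp Lstar = LinearMap.id)) :=
  stmt14_general d hd β hβd k m hm z hfix hexact L hL
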